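/- Let M ∈ ℝ^{n₁×n₂} have rank r with SVD M = AΣBᵀ; set X = AΣ^{1/2}, Y = BΣ^{1/2}, Z = [X; Y], Z̃ = [X; −Y], and b = 𝒜(M). Assume 𝒜 satisfies 6r-RIP with constant δ_{6r} ≤ 1/10. Then for every W = [U; V] ∈ ℝ^{(n₁+n₂)×r} with dist(W, Z) ≤ (1/4)‖Z‖_{op}: (21/400)·‖WWᵀ − ZZᵀ‖_F² + (1/(8‖M‖_{op}))·‖Z̃Z̃ᵀW‖_F² ≥ (16/1683)·(1/‖M‖_{op})·‖∇g(W)‖_F². -/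

import Mathlib

open Matrix

noncomputable def vnorm {ι : Type*} [Fintype ι] (v : ι → ℝ) : ℝ :=
  Real.sqrt (∑ i, v i ^ 2)

noncomputable def frob {α β : Type*} [Fintype α] [Fintype β] (M : Matrix α β ℝ) : ℝ :=
  Real.sqrt (∑ i, ∑ j, M i j ^ 2)

noncomputable def sval {α β : Type*} [Fintype α] [Fintype β] (M : Matrix α β ℝ) (k : ℕ) : ℝ :=
  sSup { t : ℝ | ∃ V : Submodule ℝ (β → ℝ), Module.finrank ℝ V = k ∧
    ∀ v ∈ V, t * vnorm v ≤ vnorm (M.mulVec v) }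

noncomputable def opNorm {α β : Type*} [Fintype α] [Fintype β] (M : Matrix α β ℝ) : ℝ :=
  sval M 1

noncomputable def pdist {α ρ : Type*} [Fintype α] [Fintype ρ] [DecidableEq ρ]
    (U X : Matrix α ρ ℝ) : ℝ :=
  sInf { d : ℝ | ∃ R : Matrix ρ ρ ℝ, Rᵀ * R = 1 ∧ d = frob (U - X * R) }

noncomputable def mip {α β : Type*} [Fintype α] [Fintype β] (A B : Matrix α β ℝ) : ℝ :=
  ∑ i, ∑ j, A i j * B i j

noncomputable def mapA {m : ℕ} {α β : Type*} [Fintype α] [Fintype β]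
    (A : Fin m → Matrix α β ℝ) (Z : Matrix α β ℝ) : Fin m → ℝ :=
  fun k => mip (A k) Z

def HasRIP {m n₁ n₂ : ℕ} (A : Fin m → Matrix (Fin n₁) (Fin n₂) ℝ) (s : ℕ) (δ : ℝ) : Prop :=
  ∀ Z : Matrix (Fin n₁) (Fin n₂) ℝ, Z.rank ≤ s →
    (1 - δ) * frob Z ^ 2 ≤ ∑ k, mapA A Z k ^ 2 ∧
      ∑ k, mapA A Z k ^ 2 ≤ (1 + δ) * frob Z ^ 2

noncomputable def gradU {m n₁ n₂ r : ℕ} (A : Fin m → Matrix (Fin n₁) (Fin n₂) ℝ)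
    (M : Matrix (Fin n₁) (Fin n₂) ℝ)
    (U : Matrix (Fin n₁) (Fin r) ℝ) (V : Matrix (Fin n₂) (Fin r) ℝ) :
    Matrix (Fin n₁) (Fin r) ℝ :=
  (∑ k, mip (A k) (U * Vᵀ - M) • (A k * V)) + (1 / 4 : ℝ) • (U * (Uᵀ * U - Vᵀ * V))

noncomputable def gradV {m n₁ n₂ r : ℕ} (A : Fin m → Matrix (Fin n₁) (Fin n₂) ℝ)
    (M : Matrix (Fin n₁) (Fin n₂) ℝ)
    (U : Matrix (Fin n₁) (Fin r) ℝ) (V : Matrix (Fin n₂) (Fin r) ℝ) :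
    Matrix (Fin n₂) (Fin r) ℝ :=
  (∑ k, mip (A k) (U * Vᵀ - M) • ((A k)ᵀ * U)) + (1 / 4 : ℝ) • (V * (Vᵀ * V - Uᵀ * U))

noncomputable def gradg {m n₁ n₂ r : ℕ} (A : Fin m → Matrix (Fin n₁) (Fin n₂) ℝ)
    (M : Matrix (Fin n₁) (Fin n₂) ℝ)
    (U : Matrix (Fin n₁) (Fin r) ℝ) (V : Matrix (Fin n₂) (Fin r) ℝ) :
    Matrix (Fin n₁ ⊕ Fin n₂) (Fin r) ℝ :=
  Matrix.fromRows (gradU A M U V) (gradV A M U V)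


section basics
variable {ι κ α β : Type*} [Fintype ι] [Fintype κ] [Fintype α] [Fintype β]

lemma vnorm_nonneg (v : ι → ℝ) : 0 ≤ vnorm v := Real.sqrt_nonneg _

lemma vnorm_sq (v : ι → ℝ) : vnorm v ^ 2 = ∑ i, v i ^ 2 :=
  Real.sq_sqrt (Finset.sum_nonneg fun i _ => sq_nonneg _)

lemma frob_nonneg (A : Matrix α β ℝ) : 0 ≤ frob A := Real.sqrt_nonneg _

lemma frob_sq (A : Matrix α β ℝ) : frob A ^ 2 = ∑ i, ∑ j, A i j ^ 2 :=
  Real.sq_sqrt (Finset.sum_nonneg fun i _ => Finset.sum_nonneg fun j _ => sq_nonneg _)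

lemma frob_sq_eq_mip (A : Matrix α β ℝ) : frob A ^ 2 = mip A A := by
  rw [frob_sq]; unfold mip; simp [sq]

lemma sqle {a b : ℝ} (h : a ^ 2 ≤ b ^ 2) (hb : 0 ≤ b) : a ≤ b := by
  nlinarith [sq_nonneg (a - b), sq_nonneg (a + b)]

lemma mip_symm (A B : Matrix α β ℝ) : mip A B = mip B A := by
  unfold mip; congr 1; ext i; congr 1; ext j; ring

lemma mip_le (A B : Matrix α β ℝ) : mip A B ≤ frob A * frob B := by
  apply sqle _ (mul_nonneg (frob_nonneg A) (frob_nonneg B))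
  rw [mul_pow, frob_sq, frob_sq]
  unfold mip
  have e1 := Fintype.sum_prod_type (f := fun p : α × β => A p.1 p.2 * B p.1 p.2)
  have e2 := Fintype.sum_prod_type (f := fun p : α × β => A p.1 p.2 ^ 2)
  have e3 := Fintype.sum_prod_type (f := fun p : α × β => B p.1 p.2 ^ 2)
  simp only at e1 e2 e3
  rw [← e1, ← e2, ← e3]
  exact Finset.sum_mul_sq_le_sq_mul_sq _ _ _

lemma dot_le (v w : ι → ℝ) : v ⬝ᵥ w ≤ vnorm v * vnorm w := by
  apply sqle _ (mul_nonneg (vnorm_nonneg v) (vnorm_nonneg w))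
  rw [mul_pow, vnorm_sq, vnorm_sq]
  exact Finset.sum_mul_sq_le_sq_mul_sq _ _ _

lemma vnorm_sq_eq_dot (v : ι → ℝ) : vnorm v ^ 2 = v ⬝ᵥ v := by
  rw [vnorm_sq]; simp [dotProduct, sq]

lemma mip_add_left (A B C : Matrix α β ℝ) : mip (A + B) C = mip A C + mip B C := by
  unfold mip; rw [← Finset.sum_add_distrib]
  refine Finset.sum_congr rfl fun i _ => ?_
  rw [← Finset.sum_add_distrib]
  exact Finset.sum_congr rfl fun j _ => by simp [add_mul]

lemma mip_smul_left (c : ℝ) (A B : Matrix α β ℝ) : mip (c • A) B = c * mip A B := by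
  unfold mip; rw [Finset.mul_sum]
  refine Finset.sum_congr rfl fun i _ => ?_
  rw [Finset.mul_sum]
  exact Finset.sum_congr rfl fun j _ => by simp [mul_assoc]

lemma mip_add_right (A B C : Matrix α β ℝ) : mip A (B + C) = mip A B + mip A C := by
  rw [mip_symm, mip_add_left, mip_symm B, mip_symm C]

lemma mip_smul_right (c : ℝ) (A B : Matrix α β ℝ) : mip A (c • B) = c * mip A B := by
  rw [mip_symm, mip_smul_left, mip_symm]

lemma mip_sub_left (A B C : Matrix α β ℝ) : mip (A - B) C = mip A C - mip B C := by
  have := mip_add_left A (-B) C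
  have h2 := mip_smul_left (-1) B C
  simp at h2
  simp [sub_eq_add_neg, this, h2]

lemma frob_smul (c : ℝ) (A : Matrix α β ℝ) : frob (c • A) = |c| * frob A := by
  unfold frob
  rw [← Real.sqrt_sq_eq_abs, ← Real.sqrt_mul (sq_nonneg c)]
  congr 1
  rw [Finset.mul_sum]
  refine Finset.sum_congr rfl fun i _ => ?_
  rw [Finset.mul_sum]
  exact Finset.sum_congr rfl fun j _ => by simp [mul_pow]

lemma frob_neg (A : Matrix α β ℝ) : frob (-A) = frob A := by
  have := frob_smul (-1) A
  simp at this
  simpa using this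

lemma frob_add_le (A B : Matrix α β ℝ) : frob (A + B) ≤ frob A + frob B := by
  apply sqle _ (add_nonneg (frob_nonneg A) (frob_nonneg B))
  have h1 : frob (A + B) ^ 2 = frob A ^ 2 + 2 * mip A B + frob B ^ 2 := by
    rw [frob_sq_eq_mip, frob_sq_eq_mip, frob_sq_eq_mip, mip_add_left, mip_add_right,
      mip_add_right, mip_symm B A]
    ring
  nlinarith [mip_le A B, frob_nonneg A, frob_nonneg B]

lemma frob_transpose (A : Matrix α β ℝ) : frob Aᵀ = frob A := by
  unfold frob
  congr 1
  rw [Finset.sum_comm]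
  rfl

lemma frob_eq_zero {A : Matrix α β ℝ} (h : frob A = 0) : A = 0 := by
  have h2 : frob A ^ 2 = 0 := by rw [h]; ring
  rw [frob_sq] at h2
  ext i j
  have := (Finset.sum_eq_zero_iff_of_nonneg (fun i _ => Finset.sum_nonneg fun j _ => sq_nonneg (A i j))).mp h2 i (Finset.mem_univ i)
  have := (Finset.sum_eq_zero_iff_of_nonneg (fun j _ => sq_nonneg (A i j))).mp this j (Finset.mem_univ j)
  simpa using pow_eq_zero_iff (n := 2) (by norm_num) |>.mp this

lemma vnorm_smul (c : ℝ) (v : ι → ℝ) : vnorm (c • v) = |c| * vnorm v := by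
  unfold vnorm
  rw [← Real.sqrt_sq_eq_abs, ← Real.sqrt_mul (sq_nonneg c), Finset.mul_sum]
  congr 1
  exact Finset.sum_congr rfl fun i _ => by simp [mul_pow]

lemma vnorm_add_le (v w : ι → ℝ) : vnorm (v + w) ≤ vnorm v + vnorm w := by
  apply sqle _ (add_nonneg (vnorm_nonneg v) (vnorm_nonneg w))
  have h1 : vnorm (v + w) ^ 2 = vnorm v ^ 2 + 2 * (v ⬝ᵥ w) + vnorm w ^ 2 := by
    rw [vnorm_sq_eq_dot, vnorm_sq_eq_dot, vnorm_sq_eq_dot]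
    simp only [dotProduct, Pi.add_apply]
    rw [Finset.mul_sum, ← Finset.sum_add_distrib, ← Finset.sum_add_distrib]
    exact Finset.sum_congr rfl fun i _ => by ring
  nlinarith [dot_le v w, vnorm_nonneg v, vnorm_nonneg w]

end basics


section opbnd
variable {ι κ μ : Type*} [Fintype ι] [Fintype κ] [Fintype μ]

def OpBnd (B : Matrix ι κ ℝ) (L : ℝ) : Prop :=
  0 ≤ L ∧ ∀ v : κ → ℝ, vnorm (B.mulVec v) ≤ L * vnorm v

lemma mulVec_vnorm_sq (B : Matrix ι κ ℝ) (v : κ → ℝ) :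
    vnorm (B.mulVec v) ^ 2 = v ⬝ᵥ (Bᵀ * B).mulVec v := by
  rw [vnorm_sq_eq_dot, ← Matrix.mulVec_mulVec, Matrix.dotProduct_mulVec v Bᵀ,
    Matrix.vecMul_transpose]

lemma opbnd_frob (B : Matrix ι κ ℝ) : OpBnd B (frob B) := by
  refine ⟨frob_nonneg B, fun v => ?_⟩
  apply sqle _ (mul_nonneg (frob_nonneg B) (vnorm_nonneg v))
  rw [mul_pow, vnorm_sq, vnorm_sq, frob_sq]
  have h : ∀ i, (B.mulVec v i) ^ 2 ≤ (∑ j, B i j ^ 2) * (∑ j, v j ^ 2) := by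
    intro i
    exact Finset.sum_mul_sq_le_sq_mul_sq _ _ _
  calc ∑ i, (B.mulVec v i) ^ 2 ≤ ∑ i, (∑ j, B i j ^ 2) * (∑ j, v j ^ 2) :=
        Finset.sum_le_sum fun i _ => h i
    _ = (∑ i, ∑ j, B i j ^ 2) * (∑ j, v j ^ 2) := by rw [Finset.sum_mul]

lemma opbnd_transpose {B : Matrix ι κ ℝ} {L : ℝ} (h : OpBnd B L) : OpBnd Bᵀ L := by
  obtain ⟨hL, hB⟩ := h
  refine ⟨hL, fun v => ?_⟩
  rcases le_or_gt (vnorm (Bᵀ.mulVec v)) 0 with h0 | h0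
  · exact le_trans h0 (mul_nonneg hL (vnorm_nonneg v))
  · have key : vnorm (Bᵀ.mulVec v) ^ 2 ≤ vnorm v * vnorm (B.mulVec (Bᵀ.mulVec v)) := by
      rw [vnorm_sq_eq_dot]
      have heq : Bᵀ.mulVec v ⬝ᵥ Bᵀ.mulVec v = v ⬝ᵥ B.mulVec (Bᵀ.mulVec v) := by
        rw [Matrix.dotProduct_mulVec, Matrix.vecMul_transpose, dotProduct_comm]
      rw [heq]
      exact dot_le _ _
    have h2 := hB (Bᵀ.mulVec v)
    nlinarith [vnorm_nonneg v, vnorm_nonneg (B.mulVec (Bᵀ.mulVec v))]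

lemma opbnd_add {B C : Matrix ι κ ℝ} {L L' : ℝ} (hB : OpBnd B L) (hC : OpBnd C L') :
    OpBnd (B + C) (L + L') := by
  refine ⟨add_nonneg hB.1 hC.1, fun v => ?_⟩
  rw [Matrix.add_mulVec]
  calc vnorm (B.mulVec v + C.mulVec v) ≤ vnorm (B.mulVec v) + vnorm (C.mulVec v) :=
        vnorm_add_le _ _
    _ ≤ L * vnorm v + L' * vnorm v := add_le_add (hB.2 v) (hC.2 v)
    _ = (L + L') * vnorm v := by ring

/-- frob (A * B) ≤ frob A * L  when OpBnd Bᵀ L -/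
lemma frob_mul_le (A : Matrix ι κ ℝ) (B : Matrix κ μ ℝ) {L : ℝ} (h : OpBnd Bᵀ L) :
    frob (A * B) ≤ frob A * L := by
  apply sqle _ (mul_nonneg (frob_nonneg A) h.1)
  rw [mul_pow, frob_sq, frob_sq]
  have hrow : ∀ i, ∑ j, (A * B) i j ^ 2 ≤ L ^ 2 * ∑ j, A i j ^ 2 := by
    intro i
    have hv : (fun j => (A * B) i j) = Bᵀ.mulVec (fun k => A i k) := by
      ext j
      simp [Matrix.mul_apply, Matrix.mulVec, dotProduct, Matrix.transpose_apply, mul_comm]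
    have := h.2 (fun k => A i k)
    have hsq : vnorm (Bᵀ.mulVec fun k => A i k) ^ 2 ≤ (L * vnorm fun k => A i k) ^ 2 := by
      have h0 := vnorm_nonneg (Bᵀ.mulVec fun k => A i k)
      nlinarith
    rw [vnorm_sq, mul_pow, vnorm_sq] at hsq
    calc ∑ j, (A * B) i j ^ 2 = ∑ j, (Bᵀ.mulVec fun k => A i k) j ^ 2 :=
        Finset.sum_congr rfl fun j _ => by rw [congrFun hv j]
      _ ≤ L ^ 2 * ∑ k, A i k ^ 2 := hsq
  calc ∑ i, ∑ j, (A * B) i j ^ 2 ≤ ∑ i, L ^ 2 * ∑ j, A i j ^ 2 :=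
        Finset.sum_le_sum fun i _ => hrow i
    _ = (∑ i, ∑ j, A i j ^ 2) * L ^ 2 := by rw [← Finset.mul_sum]; ring

end opbnd

section blocks
variable {ι κ μ ν : Type*} [Fintype ι] [Fintype κ] [Fintype μ] [Fintype ν]

lemma frob_fromRows_sq (A : Matrix ι μ ℝ) (B : Matrix κ μ ℝ) :
    frob (fromRows A B) ^ 2 = frob A ^ 2 + frob B ^ 2 := by
  rw [frob_sq, frob_sq, frob_sq, Fintype.sum_sum_type]
  rfl

lemma frob_fromBlocks_sq (A : Matrix ι μ ℝ) (B : Matrix ι ν ℝ) (C : Matrix κ μ ℝ)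
    (D : Matrix κ ν ℝ) :
    frob (fromBlocks A B C D) ^ 2 = frob A ^ 2 + frob B ^ 2 + frob C ^ 2 + frob D ^ 2 := by
  rw [frob_sq, frob_sq, frob_sq, frob_sq, frob_sq, Fintype.sum_sum_type]
  have h1 : ∀ i : ι, ∑ j : μ ⊕ ν, fromBlocks A B C D (Sum.inl i) j ^ 2
      = (∑ j, A i j ^ 2) + ∑ j, B i j ^ 2 := fun i => by
    rw [Fintype.sum_sum_type]; rfl
  have h2 : ∀ i : κ, ∑ j : μ ⊕ ν, fromBlocks A B C D (Sum.inr i) j ^ 2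
      = (∑ j, C i j ^ 2) + ∑ j, D i j ^ 2 := fun i => by
    rw [Fintype.sum_sum_type]; rfl
  rw [Finset.sum_congr rfl fun i _ => h1 i, Finset.sum_congr rfl fun i _ => h2 i,
    Finset.sum_add_distrib, Finset.sum_add_distrib]
  ring

lemma vnorm_zero : vnorm (0 : ι → ℝ) = 0 := by
  unfold vnorm; simp

lemma vnorm_pos {v : ι → ℝ} (h : v ≠ 0) : 0 < vnorm v := by
  rcases (vnorm_nonneg v).lt_or_eq with h' | h'
  · exact h'
  · exfalso; apply h
    have h2 : vnorm v ^ 2 = 0 := by rw [← h']; ring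
    rw [vnorm_sq] at h2
    ext i
    have := (Finset.sum_eq_zero_iff_of_nonneg (fun i _ => sq_nonneg (v i))).mp h2 i
      (Finset.mem_univ i)
    simpa using pow_eq_zero_iff (n := 2) (by norm_num) |>.mp this

lemma vnorm_mulVec_orth [DecidableEq κ] {R : Matrix ι κ ℝ} (h : Rᵀ * R = 1) (v : κ → ℝ) :
    vnorm (R.mulVec v) = vnorm v := by
  have h1 : vnorm (R.mulVec v) ^ 2 = vnorm v ^ 2 := by
    rw [mulVec_vnorm_sq, h, Matrix.one_mulVec, vnorm_sq_eq_dot]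
  have := vnorm_nonneg (R.mulVec v)
  have := vnorm_nonneg v
  nlinarith

lemma opbnd_of_gram_diag [DecidableEq κ] (B : Matrix ι κ ℝ) (d : κ → ℝ) (h : Bᵀ * B = Matrix.diagonal d)
    (c : ℝ) (hc : 0 ≤ c) (hd : ∀ i, d i ≤ c ^ 2) : OpBnd B c := by
  refine ⟨hc, fun v => ?_⟩
  apply sqle _ (mul_nonneg hc (vnorm_nonneg v))
  rw [mulVec_vnorm_sq, h, mul_pow, vnorm_sq]
  have hdv : ∀ i, (Matrix.diagonal d).mulVec v i = d i * v i := fun i =>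
    Matrix.mulVec_diagonal d v i
  calc v ⬝ᵥ (Matrix.diagonal d).mulVec v = ∑ i, v i * (d i * v i) :=
        Finset.sum_congr rfl fun i _ => by rw [hdv i]
    _ ≤ ∑ i, c ^ 2 * v i ^ 2 := by
        refine Finset.sum_le_sum fun i _ => ?_
        have := hd i
        nlinarith [sq_nonneg (v i)]
    _ = c ^ 2 * ∑ i, v i ^ 2 := by rw [Finset.mul_sum]

lemma opbnd_mul_orth [DecidableEq κ] {B : Matrix ι κ ℝ} {c : ℝ} (hB : OpBnd B c) {R : Matrix κ κ ℝ}
    (hR : Rᵀ * R = 1) : OpBnd (B * R) c := by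
  refine ⟨hB.1, fun v => ?_⟩
  rw [← Matrix.mulVec_mulVec]
  calc vnorm (B.mulVec (R.mulVec v)) ≤ c * vnorm (R.mulVec v) := hB.2 _
    _ = c * vnorm v := by rw [vnorm_mulVec_orth hR]

lemma opNorm_eq (M : Matrix ι κ ℝ) (c : ℝ) (hc : 0 ≤ c)
    (hub : ∀ v, vnorm (M.mulVec v) ≤ c * vnorm v)
    (v₀ : κ → ℝ) (hv₀ : vnorm v₀ = 1) (hlb : vnorm (M.mulVec v₀) = c) : opNorm M = c := by
  have hv₀ne : v₀ ≠ 0 := by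
    intro h0
    rw [h0, vnorm_zero] at hv₀
    norm_num at hv₀
  have hset : { t : ℝ | ∃ V : Submodule ℝ (κ → ℝ), Module.finrank ℝ V = 1 ∧
      ∀ v ∈ V, t * vnorm v ≤ vnorm (M.mulVec v) } = Set.Iic c := by
    ext t
    simp only [Set.mem_setOf_eq, Set.mem_Iic]
    constructor
    · rintro ⟨V, hV1, hVle⟩
      have : Nontrivial V := Module.finrank_pos_iff (R := ℝ) (M := ↥V) |>.mp (by omega)
      obtain ⟨⟨v, hvV⟩, hvne⟩ := exists_ne (0 : V)
      have hv0 : v ≠ 0 := fun h => hvne (by ext; simp [h])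
      have h1 := hVle v hvV
      have h2 := hub v
      have h3 := vnorm_pos hv0
      nlinarith
    · intro ht
      refine ⟨Submodule.span ℝ {v₀}, finrank_span_singleton hv₀ne, fun v hv => ?_⟩
      obtain ⟨a, rfl⟩ := Submodule.mem_span_singleton.mp hv
      rw [Matrix.mulVec_smul, vnorm_smul, vnorm_smul, hv₀, hlb, mul_one]
      calc t * |a| ≤ c * |a| := mul_le_mul_of_nonneg_right ht (abs_nonneg a)
        _ = |a| * c := mul_comm _ _
  rw [opNorm, sval, hset, csSup_Iic]

lemma opNorm_of_isEmpty [IsEmpty κ] (M : Matrix ι κ ℝ) : opNorm M = 0 := by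
  have hset : { t : ℝ | ∃ V : Submodule ℝ (κ → ℝ), Module.finrank ℝ V = 1 ∧
      ∀ v ∈ V, t * vnorm v ≤ vnorm (M.mulVec v) } = ∅ := by
    ext t
    simp only [Set.mem_setOf_eq, Set.mem_empty_iff_false, iff_false]
    rintro ⟨V, hV1, -⟩
    have h0 : Module.finrank ℝ (κ → ℝ) = 0 := by
      simp [Module.finrank_fintype_fun_eq_card]
    have := Submodule.finrank_le V
    omega
  rw [opNorm, sval, hset, Real.sSup_empty]

end blocks

section rip
variable {m n₁ n₂ : ℕ}

lemma rank_add_le' (A B : Matrix (Fin n₁) (Fin n₂) ℝ) : (A + B).rank ≤ A.rank + B.rank := by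
  unfold Matrix.rank
  have hr : LinearMap.range (A + B).mulVecLin ≤
      LinearMap.range A.mulVecLin ⊔ LinearMap.range B.mulVecLin := by
    rintro x ⟨v, rfl⟩
    rw [Matrix.mulVecLin_add]
    exact Submodule.add_mem_sup ⟨v, rfl⟩ ⟨v, rfl⟩
  calc Module.finrank ℝ (LinearMap.range (A + B).mulVecLin)
      ≤ Module.finrank ℝ ↥(LinearMap.range A.mulVecLin ⊔ LinearMap.range B.mulVecLin) :=
        Submodule.finrank_mono hr
    _ ≤ _ := Submodule.finrank_add_le_finrank_add_finrank _ _

lemma rank_smul_le (a : ℝ) (C : Matrix (Fin n₁) (Fin n₂) ℝ) : (a • C).rank ≤ C.rank := by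
  have h : a • C = C * (a • (1 : Matrix (Fin n₂) (Fin n₂) ℝ)) := by
    rw [Matrix.mul_smul, Matrix.mul_one]
  rw [h]
  exact Matrix.rank_mul_le_left _ _

lemma mapA_smul_add (A : Fin m → Matrix (Fin n₁) (Fin n₂) ℝ)
    (a b : ℝ) (E K : Matrix (Fin n₁) (Fin n₂) ℝ) (j : Fin m) :
    mapA A (a • E + b • K) j = a * mapA A E j + b * mapA A K j := by
  unfold mapA
  rw [mip_add_right, mip_smul_right, mip_smul_right]

lemma rip_dev {A : Fin m → Matrix (Fin n₁) (Fin n₂) ℝ} {s : ℕ} {δ : ℝ}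
    (hA : HasRIP A s δ) (hδ : δ ≤ 1 / 10) (E K : Matrix (Fin n₁) (Fin n₂) ℝ)
    (hEK : E.rank + K.rank ≤ s) :
    ∑ j, mapA A E j * mapA A K j ≤ mip E K + (1 / 10) * frob E * frob K := by
  by_cases hE0 : frob E = 0
  · have hE := frob_eq_zero hE0
    subst hE
    have hz : ∀ j, mapA A (0 : Matrix (Fin n₁) (Fin n₂) ℝ) j = 0 := by
      intro j; unfold mapA mip; simp
    rw [Finset.sum_congr rfl fun j _ => by rw [hz j, zero_mul]]
    unfold mip
    simp only [Matrix.zero_apply, zero_mul, Finset.sum_const_zero]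
    rw [hE0]
    simp [frob_nonneg K]
  by_cases hK0 : frob K = 0
  · have hK := frob_eq_zero hK0
    subst hK
    have hz : ∀ j, mapA A (0 : Matrix (Fin n₁) (Fin n₂) ℝ) j = 0 := by
      intro j; unfold mapA mip; simp
    rw [Finset.sum_congr rfl fun j _ => by rw [hz j, mul_zero]]
    rw [mip_symm]
    unfold mip
    simp only [Matrix.zero_apply, zero_mul, Finset.sum_const_zero]
    rw [hK0]
    simp
  have hfe : 0 < frob E := (frob_nonneg E).lt_of_ne (Ne.symm hE0)
  have hfk : 0 < frob K := (frob_nonneg K).lt_of_ne (Ne.symm hK0)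
  set fe := frob E
  set fk := frob K
  set P := fk • E + fe • K with hPdef
  set N := fk • E + (-fe) • K with hNdef
  have hrankP : P.rank ≤ s :=
    le_trans (le_trans (rank_add_le' _ _)
      (add_le_add (rank_smul_le _ _) (rank_smul_le _ _))) hEK
  have hrankN : N.rank ≤ s :=
    le_trans (le_trans (rank_add_le' _ _)
      (add_le_add (rank_smul_le _ _) (rank_smul_le _ _))) hEK
  have hP := (hA P hrankP).2
  have hN := (hA N hrankN).1
  -- expansions of the measurement sums
  have hPsum : ∑ j, mapA A P j ^ 2
      = fk ^ 2 * (∑ j, mapA A E j ^ 2) + 2 * fk * fe * (∑ j, mapA A E j * mapA A K j)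
        + fe ^ 2 * (∑ j, mapA A K j ^ 2) := by
    rw [Finset.mul_sum, Finset.mul_sum, Finset.mul_sum, ← Finset.sum_add_distrib,
      ← Finset.sum_add_distrib]
    refine Finset.sum_congr rfl fun j _ => ?_
    rw [mapA_smul_add]
    ring
  have hNsum : ∑ j, mapA A N j ^ 2
      = fk ^ 2 * (∑ j, mapA A E j ^ 2) - 2 * fk * fe * (∑ j, mapA A E j * mapA A K j)
        + fe ^ 2 * (∑ j, mapA A K j ^ 2) := by
    rw [Finset.mul_sum, Finset.mul_sum, Finset.mul_sum, ← Finset.sum_sub_distrib,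
      ← Finset.sum_add_distrib]
    refine Finset.sum_congr rfl fun j _ => ?_
    rw [mapA_smul_add]
    ring
  -- expansions of the Frobenius norms
  have hEE : mip E E = fe ^ 2 := (frob_sq_eq_mip E).symm
  have hKK : mip K K = fk ^ 2 := (frob_sq_eq_mip K).symm
  have hPfrob : frob P ^ 2 = 2 * fe ^ 2 * fk ^ 2 + 2 * fe * fk * mip E K := by
    rw [frob_sq_eq_mip, hPdef]
    simp only [mip_add_left, mip_add_right, mip_smul_left, mip_smul_right]
    rw [hEE, hKK, mip_symm K E]
    ring
  have hNfrob : frob N ^ 2 = 2 * fe ^ 2 * fk ^ 2 - 2 * fe * fk * mip E K := by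
    rw [frob_sq_eq_mip, hNdef]
    simp only [mip_add_left, mip_add_right, mip_smul_left, mip_smul_right]
    rw [hEE, hKK, mip_symm K E]
    ring
  rw [hPsum, hPfrob] at hP
  rw [hNsum, hNfrob] at hN
  nlinarith only [hP, hN, hδ, hfe, hfk, mul_pos hfe hfk,
    mul_pos (mul_pos hfe hfk) (mul_pos hfe hfk)]

end rip

section helpers
variable {ι κ μ ν : Type*} [Fintype ι] [Fintype κ] [Fintype μ] [Fintype ν]

lemma sqeq {a b : ℝ} (ha : 0 ≤ a) (hb : 0 ≤ b) (h : a ^ 2 = b ^ 2) : a = b := by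
  nlinarith

lemma col_vnorm {Q : Matrix ι κ ℝ} [DecidableEq κ] (hQ : Qᵀ * Q = 1) (i₀ : κ) :
    vnorm (fun j => Q j i₀) = 1 := by
  have h : ∑ j, (Q j i₀) ^ 2 = 1 := by
    have := congrFun (congrFun hQ i₀) i₀
    rw [Matrix.mul_apply] at this
    simp only [Matrix.one_apply_eq] at this
    rw [← this]
    exact Finset.sum_congr rfl fun j _ => by rw [Matrix.transpose_apply, sq]
  unfold vnorm
  rw [h, Real.sqrt_one]

lemma vnorm_single [DecidableEq ι] (i₀ : ι) : vnorm (Pi.single i₀ 1 : ι → ℝ) = 1 := by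
  unfold vnorm
  have h : ∑ i, ((Pi.single i₀ 1 : ι → ℝ) i) ^ 2 = 1 := by
    rw [Finset.sum_eq_single i₀]
    · simp
    · intro b _ hb; simp [Pi.single_apply, hb]
    · intro h; exact absurd (Finset.mem_univ i₀) h
  rw [h, Real.sqrt_one]

lemma pdist_lt (W X : Matrix ι κ ℝ) [DecidableEq κ] {b : ℝ} (h : pdist W X < b) :
    ∃ R : Matrix κ κ ℝ, Rᵀ * R = 1 ∧ frob (W - X * R) < b := by
  have hne : { d : ℝ | ∃ R : Matrix κ κ ℝ, Rᵀ * R = 1 ∧ d = frob (W - X * R) }.Nonempty :=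
    ⟨frob (W - X * 1), 1, by rw [Matrix.transpose_one, Matrix.one_mul], rfl⟩
  obtain ⟨d, ⟨R, hR, rfl⟩, hdb⟩ := exists_lt_of_csInf_lt hne h
  exact ⟨R, hR, hdb⟩

lemma fromRows_sub (A A' : Matrix ι μ ℝ) (B B' : Matrix κ μ ℝ) :
    fromRows A B - fromRows A' B' = fromRows (A - A') (B - B') := by
  ext (i | i) j <;> simp

lemma fromRows_add (A A' : Matrix ι μ ℝ) (B B' : Matrix κ μ ℝ) :
    fromRows A B + fromRows A' B' = fromRows (A + A') (B + B') := by
  ext (i | i) j <;> simp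

lemma fromRows_smul (c : ℝ) (A : Matrix ι μ ℝ) (B : Matrix κ μ ℝ) :
    c • fromRows A B = fromRows (c • A) (c • B) := by
  ext (i | i) j <;> simp

lemma fromBlocks_sub (A A' : Matrix ι μ ℝ) (B B' : Matrix ι ν ℝ) (C C' : Matrix κ μ ℝ)
    (D D' : Matrix κ ν ℝ) :
    fromBlocks A B C D - fromBlocks A' B' C' D'
      = fromBlocks (A - A') (B - B') (C - C') (D - D') := by
  ext (i | i) (j | j) <;> simp [Matrix.fromBlocks]

lemma fromBlocks_mul_fromRows' {ρ : Type*} [Fintype ρ] (A : Matrix ι μ ℝ) (B : Matrix ι ν ℝ)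
    (C : Matrix κ μ ℝ) (D : Matrix κ ν ℝ) (P : Matrix μ ρ ℝ) (Q : Matrix ν ρ ℝ) :
    fromBlocks A B C D * fromRows P Q = fromRows (A * P + B * Q) (C * P + D * Q) := by
  ext (i | i) j <;>
    simp [Matrix.mul_apply, Matrix.fromBlocks, Fintype.sum_sum_type,
        Matrix.fromRows_apply_inl, Matrix.fromRows_apply_inr]

lemma mip_sum_left {γ : Type*} (s : Finset γ) (f : γ → Matrix ι κ ℝ) (T : Matrix ι κ ℝ) :
    mip (∑ k ∈ s, f k) T = ∑ k ∈ s, mip (f k) T := by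
  classical
  induction s using Finset.induction with
  | empty => simp [mip]
  | insert _ _ hx ih =>
      rw [Finset.sum_insert hx, Finset.sum_insert hx, mip_add_left, ih]

lemma mip_mul_right_adj (B : Matrix ι κ ℝ) (V : Matrix κ μ ℝ) (T : Matrix ι μ ℝ) :
    mip (B * V) T = mip B (T * Vᵀ) := by
  unfold mip
  simp only [Matrix.mul_apply, Finset.sum_mul, Matrix.transpose_apply, Finset.mul_sum]
  refine Finset.sum_congr rfl fun i _ => ?_
  rw [Finset.sum_comm]
  exact Finset.sum_congr rfl fun l _ => Finset.sum_congr rfl fun j _ => by ring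

lemma mip_transpose_mul_adj (B : Matrix ι κ ℝ) (U : Matrix ι μ ℝ) (T : Matrix κ μ ℝ) :
    mip (Bᵀ * U) T = mip B (U * Tᵀ) := by
  unfold mip
  simp only [Matrix.mul_apply, Finset.sum_mul, Matrix.transpose_apply, Finset.mul_sum]
  rw [Finset.sum_comm (γ := ι)]
  refine Finset.sum_congr rfl fun i _ => ?_
  rw [Finset.sum_comm]
  exact Finset.sum_congr rfl fun l _ => Finset.sum_congr rfl fun j _ => by ring

end helpers

set_option maxHeartbeats 4000000 in
/-- Lipschitz-gradient type condition for g (rectangular case). -/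
theorem rect_lipschitz_gradient {n₁ n₂ r m : ℕ}
    (A : Fin m → Matrix (Fin n₁) (Fin n₂) ℝ)
    (P : Matrix (Fin n₁) (Fin r) ℝ) (Q : Matrix (Fin n₂) (Fin r) ℝ) (σ : Fin r → ℝ)
    (hP : Pᵀ * P = 1) (hQ : Qᵀ * Q = 1) (hσ : ∀ i, 0 < σ i)
    (M : Matrix (Fin n₁) (Fin n₂) ℝ) (hM : M = P * Matrix.diagonal σ * Qᵀ)
    (X : Matrix (Fin n₁) (Fin r) ℝ)
    (hX : X = P * Matrix.diagonal (fun i => Real.sqrt (σ i)))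
    (Y : Matrix (Fin n₂) (Fin r) ℝ)
    (hY : Y = Q * Matrix.diagonal (fun i => Real.sqrt (σ i)))
    (δ : ℝ) (hRIP : HasRIP A (6 * r) δ) (hδ : δ ≤ 1 / 10)
    (U : Matrix (Fin n₁) (Fin r) ℝ) (V : Matrix (Fin n₂) (Fin r) ℝ)
    (hdist : pdist (Matrix.fromRows U V) (Matrix.fromRows X Y) ≤
      (1 / 4) * opNorm (Matrix.fromRows X Y)) :
    (21 / 400) *
        frob (Matrix.fromRows U V * (Matrix.fromRows U V)ᵀ -
          Matrix.fromRows X Y * (Matrix.fromRows X Y)ᵀ) ^ 2 +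
      (1 / (8 * opNorm M)) *
        frob (Matrix.fromRows X (-Y) * (Matrix.fromRows X (-Y))ᵀ * Matrix.fromRows U V) ^ 2 ≥
      (16 / 1683) * (1 / opNorm M) * frob (gradg A M U V) ^ 2 := by
  rcases Nat.eq_zero_or_pos r with hr0 | hrpos
  · -- degenerate case r = 0 : M = 0 and opNorm M = 0
    subst hr0
    have hM0 : M = 0 := by
      rw [hM]; ext i j; simp [Matrix.mul_apply]
    have hopM : opNorm M = 0 := by
      rcases Nat.eq_zero_or_pos n₂ with h2 | h2
      · subst h2
        exact opNorm_of_isEmpty M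
      · exact opNorm_eq M 0 le_rfl
          (fun v => by rw [hM0, Matrix.zero_mulVec, vnorm_zero, zero_mul])
          (Pi.single ⟨0, h2⟩ 1) (vnorm_single _)
          (by rw [hM0, Matrix.zero_mulVec, vnorm_zero])
    rw [hopM]
    norm_num
    positivity
  · -- main case r ≥ 1
    obtain ⟨i₀, -, hmax⟩ := Finset.exists_max_image Finset.univ σ ⟨⟨0, hrpos⟩, Finset.mem_univ _⟩
    have hmax' : ∀ i, σ i ≤ σ i₀ := fun i => hmax i (Finset.mem_univ i)
    set σm := σ i₀ with hσmdef
    have hσm0 : 0 < σm := hσ i₀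
    set s := Real.sqrt σm with hsdef
    have hs0 : 0 < s := Real.sqrt_pos.mpr hσm0
    have hs2 : s ^ 2 = σm := Real.sq_sqrt hσm0.le
    set c2 := Real.sqrt (2 * σm) with hc2def
    have hc20 : 0 < c2 := Real.sqrt_pos.mpr (by linarith)
    have hc22 : c2 ^ 2 = 2 * σm := Real.sq_sqrt (by linarith)
    have hc2s : c2 ^ 2 = 2 * s ^ 2 := by rw [hc22, hs2]
    set Z := fromRows X Y with hZdef
    set Zt := fromRows X (-Y) with hZtdef
    set W := fromRows U V with hWdef
    -- gram identities
    have hsqs : (fun i => Real.sqrt (σ i) * Real.sqrt (σ i)) = σ :=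
      funext fun i => Real.mul_self_sqrt (hσ i).le
    have hXX : Xᵀ * X = Matrix.diagonal σ := by
      rw [hX, Matrix.transpose_mul, Matrix.diagonal_transpose, Matrix.mul_assoc,
        ← Matrix.mul_assoc Pᵀ P, hP, Matrix.one_mul, Matrix.diagonal_mul_diagonal, hsqs]
    have hYY : Yᵀ * Y = Matrix.diagonal σ := by
      rw [hY, Matrix.transpose_mul, Matrix.diagonal_transpose, Matrix.mul_assoc,
        ← Matrix.mul_assoc Qᵀ Q, hQ, Matrix.one_mul, Matrix.diagonal_mul_diagonal, hsqs]
    have hZZ : Zᵀ * Z = Matrix.diagonal (fun i => 2 * σ i) := by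
      rw [hZdef, Matrix.transpose_fromRows, Matrix.fromCols_mul_fromRows, hXX, hYY,
        Matrix.diagonal_add]
      exact congrArg Matrix.diagonal (funext fun i => by simp [Pi.add_apply, two_mul])
    have hMXY : M = X * Yᵀ := by
      rw [hX, hY, hM, Matrix.transpose_mul, Matrix.diagonal_transpose, ← Matrix.mul_assoc,
        Matrix.mul_assoc P (Matrix.diagonal fun i => Real.sqrt (σ i))
          (Matrix.diagonal fun i => Real.sqrt (σ i)),
        Matrix.diagonal_mul_diagonal, hsqs]
    -- operator bounds
    have hXop : OpBnd X s :=
      opbnd_of_gram_diag X σ hXX s hs0.le (fun i => by rw [hs2]; exact hmax' i)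
    have hYop : OpBnd Y s :=
      opbnd_of_gram_diag Y σ hYY s hs0.le (fun i => by rw [hs2]; exact hmax' i)
    have hZop : OpBnd Z c2 :=
      opbnd_of_gram_diag Z _ hZZ c2 hc20.le (fun i => by rw [hc22]; linarith [hmax' i])
    -- opNorm M = σm
    have hQ1 : OpBnd Qᵀ 1 :=
      opbnd_transpose ⟨zero_le_one, fun v => by rw [vnorm_mulVec_orth hQ, one_mul]⟩
    have hDiagOp : OpBnd (Matrix.diagonal σ) σm :=
      opbnd_of_gram_diag _ (fun i => σ i * σ i)
        (by rw [Matrix.diagonal_transpose, Matrix.diagonal_mul_diagonal])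
        σm hσm0.le (fun i => by
          show σ i * σ i ≤ σm ^ 2
          nlinarith only [mul_le_mul (hmax' i) (hmax' i) (hσ i).le hσm0.le])
    have hopM : opNorm M = σm := by
      apply opNorm_eq M σm hσm0.le
      · intro v
        have hMv : M.mulVec v = P.mulVec ((Matrix.diagonal σ).mulVec (Qᵀ.mulVec v)) := by
          rw [hM, Matrix.mulVec_mulVec, Matrix.mulVec_mulVec]
        rw [hMv, vnorm_mulVec_orth hP]
        calc vnorm ((Matrix.diagonal σ).mulVec (Qᵀ.mulVec v))
            ≤ σm * vnorm (Qᵀ.mulVec v) := hDiagOp.2 _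
          _ ≤ σm * (1 * vnorm v) := mul_le_mul_of_nonneg_left (hQ1.2 v) hσm0.le
          _ = σm * vnorm v := by ring
      · exact col_vnorm hQ i₀
      · have hMQ : M * Q = P * Matrix.diagonal σ := by
          rw [hM, Matrix.mul_assoc (P * Matrix.diagonal σ) Qᵀ Q, hQ, Matrix.mul_one]
        have hMv : M.mulVec (fun j => Q j i₀) = σm • (fun i => P i i₀) := by
          ext i
          have h1 : M.mulVec (fun j => Q j i₀) i = (M * Q) i i₀ := by
            simp [Matrix.mul_apply, Matrix.mulVec, dotProduct]
          rw [h1, hMQ, Matrix.mul_diagonal]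
          simp [hσmdef]
          ring
        rw [hMv, vnorm_smul, col_vnorm hP i₀, abs_of_nonneg hσm0.le, mul_one]
    -- opNorm Z = c2
    have hopZ : opNorm Z = c2 := by
      apply opNorm_eq Z c2 hc20.le hZop.2 (Pi.single i₀ 1) (vnorm_single i₀)
      apply sqeq (vnorm_nonneg _) hc20.le
      rw [mulVec_vnorm_sq, hZZ, hc22]
      rw [dotProduct, Finset.sum_eq_single i₀]
      · rw [Matrix.mulVec_diagonal]
        simp
        rfl
      · intro b _ hb
        simp [Pi.single_apply, hb]
      · simp
    -- extract a near-optimal rotation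
    have hdlt : pdist W Z < (13 / 50) * c2 := by
      refine lt_of_le_of_lt hdist ?_
      rw [hopZ]
      linarith only [hc20]
    obtain ⟨R, hR, hWZR⟩ := pdist_lt W Z hdlt
    set ΔU := U - X * R with hΔU
    set ΔV := V - Y * R with hΔV
    have hΔsplit : W - Z * R = fromRows ΔU ΔV := by
      rw [hWdef, hZdef, Matrix.fromRows_mul, fromRows_sub]
    set dU := frob ΔU with hdU
    set dV := frob ΔV with hdV
    set dd := frob (W - Z * R) with hdddef
    have hdd0 : 0 ≤ dd := frob_nonneg _
    have hdd : dd < (13 / 50) * c2 := hWZR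
    have hdsq : dU ^ 2 + dV ^ 2 = dd ^ 2 := by
      rw [hdddef, hΔsplit, frob_fromRows_sq]
    have hdU0 : 0 ≤ dU := frob_nonneg _
    have hdV0 : 0 ≤ dV := frob_nonneg _
    set LU := s + dU with hLU
    set LV := s + dV with hLV
    set LW := c2 + dd with hLWdef
    have hUop : OpBnd U LU := by
      have h1 : OpBnd (X * R + ΔU) LU := opbnd_add (opbnd_mul_orth hXop hR) (opbnd_frob ΔU)
      have h2 : X * R + ΔU = U := by rw [hΔU, add_sub_cancel]
      rwa [h2] at h1
    have hVop : OpBnd V LV := by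
      have h1 : OpBnd (Y * R + ΔV) LV := opbnd_add (opbnd_mul_orth hYop hR) (opbnd_frob ΔV)
      have h2 : Y * R + ΔV = V := by rw [hΔV, add_sub_cancel]
      rwa [h2] at h1
    have hWop : OpBnd W LW := by
      have h1 : OpBnd (Z * R + (W - Z * R)) LW :=
        opbnd_add (opbnd_mul_orth hZop hR) (opbnd_frob _)
      have h2 : Z * R + (W - Z * R) = W := add_sub_cancel _ _
      rwa [h2] at h1
    -- blocks
    set E := U * Vᵀ - M with hE
    have hWW : W * Wᵀ = fromBlocks (U * Uᵀ) (U * Vᵀ) (V * Uᵀ) (V * Vᵀ) := by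
      rw [hWdef, Matrix.transpose_fromRows, Matrix.fromRows_mul_fromCols]
    have hZZo : Z * Zᵀ = fromBlocks (X * Xᵀ) (X * Yᵀ) (Y * Xᵀ) (Y * Yᵀ) := by
      rw [hZdef, Matrix.transpose_fromRows, Matrix.fromRows_mul_fromCols]
    have hZtZt : Zt * Ztᵀ = fromBlocks (X * Xᵀ) (-(X * Yᵀ)) (-(Y * Xᵀ)) (Y * Yᵀ) := by
      rw [hZtdef, Matrix.transpose_fromRows, Matrix.fromRows_mul_fromCols]
      simp [Matrix.transpose_neg, Matrix.mul_neg, Matrix.neg_mul, neg_neg]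
    set D := W * Wᵀ - Z * Zᵀ with hDdef
    have hDblocks : D = fromBlocks (U * Uᵀ - X * Xᵀ) (U * Vᵀ - X * Yᵀ)
        (V * Uᵀ - Y * Xᵀ) (V * Vᵀ - Y * Yᵀ) := by
      rw [hDdef, hWW, hZZo, fromBlocks_sub]
    set Dq := frob D with hDq
    have hDq0 : 0 ≤ Dq := frob_nonneg _
    have hDqsq : Dq ^ 2 = frob (U * Uᵀ - X * Xᵀ) ^ 2 + frob (U * Vᵀ - X * Yᵀ) ^ 2
        + frob (V * Uᵀ - Y * Xᵀ) ^ 2 + frob (V * Vᵀ - Y * Yᵀ) ^ 2 := by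
      rw [hDq, hDblocks, frob_fromBlocks_sq]
    have hED : frob E = frob (U * Vᵀ - X * Yᵀ) := by rw [hE, hMXY]
    have hfe0 : 0 ≤ frob E := frob_nonneg _
    have hED2 : 2 * frob E ^ 2 ≤ Dq ^ 2 := by
      have h21 : frob (V * Uᵀ - Y * Xᵀ) = frob (U * Vᵀ - X * Yᵀ) := by
        rw [show V * Uᵀ - Y * Xᵀ = (U * Vᵀ - X * Yᵀ)ᵀ from by
          rw [Matrix.transpose_sub, Matrix.transpose_mul, Matrix.transpose_mul,
            Matrix.transpose_transpose, Matrix.transpose_transpose], frob_transpose]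
      rw [hED]
      rw [h21] at hDqsq
      linarith only [hDqsq, sq_nonneg (frob (U * Uᵀ - X * Xᵀ)),
        sq_nonneg (frob (V * Vᵀ - Y * Yᵀ))]
    set JDJ := fromBlocks (U * Uᵀ - X * Xᵀ) (-(U * Vᵀ - X * Yᵀ))
      (-(V * Uᵀ - Y * Xᵀ)) (V * Vᵀ - Y * Yᵀ) with hJDJ
    have hJfrob : frob JDJ = Dq := by
      apply sqeq (frob_nonneg _) hDq0
      rw [hJDJ, frob_fromBlocks_sq, frob_neg, frob_neg, hDqsq]
    set Cm := fromBlocks (U * Uᵀ) (-(U * Vᵀ)) (-(V * Uᵀ)) (V * Vᵀ) with hCm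
    have hCsum : Cm = JDJ + Zt * Ztᵀ := by
      rw [hCm, hJDJ, hZtZt, Matrix.fromBlocks_add]
      refine Matrix.fromBlocks_inj.mpr ⟨?_, ?_, ?_, ?_⟩ <;> abel
    have hCW : Cm * W = fromRows (U * (Uᵀ * U - Vᵀ * V)) (V * (Vᵀ * V - Uᵀ * U)) := by
      rw [hCm, hWdef, fromBlocks_mul_fromRows']
      rw [show U * Uᵀ * U + -(U * Vᵀ) * V = U * (Uᵀ * U - Vᵀ * V) from by
        rw [Matrix.mul_sub, Matrix.neg_mul, Matrix.mul_assoc, Matrix.mul_assoc]; abel]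
      rw [show -(V * Uᵀ) * U + V * Vᵀ * V = V * (Vᵀ * V - Uᵀ * U) from by
        rw [Matrix.mul_sub, Matrix.neg_mul, Matrix.mul_assoc, Matrix.mul_assoc]; abel]
    -- gradient split
    set SV := ∑ k, mip (A k) E • (A k * V) with hSV
    set StU := ∑ k, mip (A k) E • ((A k)ᵀ * U) with hStU
    have hgrad : gradg A M U V = fromRows SV StU + (1 / 4 : ℝ) • (Cm * W) := by
      unfold gradg gradU gradV
      rw [← hE, hCW, fromRows_smul, fromRows_add]
    -- G1 bound via RIP
    set K := SV * Vᵀ + U * StUᵀ with hK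
    set g1 := frob (fromRows SV StU) with hg1
    have hg10 : 0 ≤ g1 := frob_nonneg _
    have hg1sq : g1 ^ 2 = mip SV SV + mip StU StU := by
      rw [hg1, frob_fromRows_sq, frob_sq_eq_mip, frob_sq_eq_mip]
    have e1 : ∀ T : Matrix (Fin n₁) (Fin r) ℝ,
        mip SV T = ∑ k, mip (A k) E * mip (A k) (T * Vᵀ) := by
      intro T
      rw [hSV, mip_sum_left]
      exact Finset.sum_congr rfl fun k _ => by rw [mip_smul_left, mip_mul_right_adj]
    have e2 : ∀ T : Matrix (Fin n₂) (Fin r) ℝ,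
        mip StU T = ∑ k, mip (A k) E * mip (A k) (U * Tᵀ) := by
      intro T
      rw [hStU, mip_sum_left]
      exact Finset.sum_congr rfl fun k _ => by rw [mip_smul_left, mip_transpose_mul_adj]
    have hinner : g1 ^ 2 = ∑ k, mapA A E k * mapA A K k := by
      rw [hg1sq, e1 SV, e2 StU, ← Finset.sum_add_distrib]
      refine Finset.sum_congr rfl fun k _ => ?_
      show mip (A k) E * mip (A k) (SV * Vᵀ) + mip (A k) E * mip (A k) (U * StUᵀ)
        = mapA A E k * mapA A K k
      simp only [mapA]
      rw [hK, mip_add_right]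
      ring
    -- ranks
    have hrankr : ∀ (B : Matrix (Fin n₁) (Fin r) ℝ) (Cc : Matrix (Fin r) (Fin n₂) ℝ),
        (B * Cc).rank ≤ r := fun B Cc =>
      le_trans (Matrix.rank_mul_le_left B Cc) (Matrix.rank_le_width B)
    have hrankE : E.rank ≤ 2 * r := by
      have h1 : E = U * Vᵀ + (-1 : ℝ) • M := by rw [hE]; ext i j; simp; ring
      calc E.rank ≤ (U * Vᵀ).rank + ((-1 : ℝ) • M).rank := h1 ▸ rank_add_le' _ _
        _ ≤ r + r := add_le_add (hrankr U Vᵀ)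
            (le_trans (rank_smul_le _ _) (by rw [hM]; exact hrankr _ _))
        _ = 2 * r := by ring
    have hrankK : K.rank ≤ 2 * r := by
      calc K.rank ≤ (SV * Vᵀ).rank + (U * StUᵀ).rank := hK ▸ rank_add_le' _ _
        _ ≤ r + r := add_le_add (hrankr SV Vᵀ) (hrankr U StUᵀ)
        _ = 2 * r := by ring
    have hdev := rip_dev hRIP hδ E K (by omega)
    -- frob K bound
    have hVtt : OpBnd (Vᵀ)ᵀ LV := by rw [Matrix.transpose_transpose]; exact hVop
    have hUtt : OpBnd (Uᵀ)ᵀ LU := by rw [Matrix.transpose_transpose]; exact hUop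
    have hKb : frob K ≤ LV * frob SV + LU * frob StU := by
      calc frob K ≤ frob (SV * Vᵀ) + frob (U * StUᵀ) := hK ▸ frob_add_le _ _
        _ ≤ frob SV * LV + frob StU * LU := by
            have h1 : frob (SV * Vᵀ) ≤ frob SV * LV := frob_mul_le SV Vᵀ hVtt
            have h2 : frob (U * StUᵀ) ≤ frob StU * LU := by
              rw [show U * StUᵀ = (StU * Uᵀ)ᵀ from by
                rw [Matrix.transpose_mul, Matrix.transpose_transpose], frob_transpose]
              exact frob_mul_le StU Uᵀ hUtt
            linarith
        _ = LV * frob SV + LU * frob StU := by ring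
    have hK0 : 0 ≤ frob K := frob_nonneg _
    set cL := Real.sqrt (LU ^ 2 + LV ^ 2) with hcL
    have hcL0 : 0 ≤ cL := Real.sqrt_nonneg _
    have hcL2 : cL ^ 2 = LU ^ 2 + LV ^ 2 := Real.sq_sqrt (by positivity)
    have hLU0 : 0 ≤ LU := by rw [hLU]; positivity
    have hLV0 : 0 ≤ LV := by rw [hLV]; positivity
    have hcauchy : LV * frob SV + LU * frob StU ≤ cL * g1 := by
      apply sqle _ (mul_nonneg hcL0 hg10)
      have hgs : g1 ^ 2 = frob SV ^ 2 + frob StU ^ 2 := by rw [hg1, frob_fromRows_sq]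
      rw [mul_pow, hcL2, hgs]
      nlinarith only [sq_nonneg (LU * frob SV - LV * frob StU), frob_nonneg SV, frob_nonneg StU]
    have hg1b : g1 ≤ (11 / 10) * frob E * cL := by
      rcases eq_or_lt_of_le hg10 with h0 | h0
      · rw [← h0]; positivity
      · have hsq : g1 ^ 2 ≤ (11 / 10) * frob E * (cL * g1) := by
          have hm := mip_le E K
          have hfk := mul_le_mul_of_nonneg_left hcauchy (by linarith : (0:ℝ) ≤ (11/10) * frob E)
          have hfk2 := mul_le_mul_of_nonneg_left hKb (by linarith : (0:ℝ) ≤ (11/10) * frob E)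
          nlinarith only [hinner, hdev, hfe0, hK0, hm, hfk, hfk2]
        nlinarith only [hsq, h0]
    -- assemble gradient norm bound
    set zq := frob (Zt * Ztᵀ * W) with hzq
    have hzq0 : 0 ≤ zq := frob_nonneg _
    have hgqb : frob (gradg A M U V) ≤ g1 + (1 / 4) * (Dq * LW) + (1 / 4) * zq := by
      have hCW2 : Cm * W = JDJ * W + Zt * Ztᵀ * W := by
        rw [hCsum, Matrix.add_mul, Matrix.mul_assoc]
      have hJW : frob (JDJ * W) ≤ Dq * LW := by
        have := frob_mul_le JDJ W (opbnd_transpose hWop)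
        rwa [hJfrob] at this
      calc frob (gradg A M U V) ≤ frob (fromRows SV StU) + frob ((1 / 4 : ℝ) • (Cm * W)) := by
            rw [hgrad]; exact frob_add_le _ _
        _ = g1 + (1 / 4) * frob (Cm * W) := by
            rw [frob_smul]; norm_num; exact hg1.symm
        _ ≤ g1 + (1 / 4) * (frob (JDJ * W) + frob (Zt * Ztᵀ * W)) := by
            rw [hCW2]
            have h4 := frob_add_le (JDJ * W) (Zt * Ztᵀ * W)
            have h5 := mul_le_mul_of_nonneg_left h4 (by norm_num : (0:ℝ) ≤ 1/4)
            exact add_le_add_right h5 g1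
        _ ≤ g1 + (1 / 4) * (Dq * LW + frob (Zt * Ztᵀ * W)) := by
            have h5 := add_le_add_left hJW (frob (Zt * Ztᵀ * W))
            have h6 := mul_le_mul_of_nonneg_left h5 (by norm_num : (0:ℝ) ≤ 1/4)
            exact add_le_add_right h6 g1
        _ = g1 + (1 / 4) * (Dq * LW) + (1 / 4) * zq := by rw [hzq]; ring
    -- numeric estimates
    have hcLb : cL ^ 2 ≤ (3969 / 1250) * s ^ 2 := by
      rw [hcL2, hLU, hLV]
      have hdduv : (dU + dV) ^ 2 ≤ 2 * dd ^ 2 := by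
        nlinarith only [sq_nonneg (dU - dV), hdsq]
      have hdd2 : dd ^ 2 ≤ (169 / 1250) * s ^ 2 := by
        have h5 := mul_le_mul hdd.le hdd.le hdd0 (by linarith only [hc20] : (0:ℝ) ≤ 13 / 50 * c2)
        nlinarith only [h5, hc2s]
      have hduv : dU + dV ≤ (13 / 25) * s := by
        apply sqle _ (by positivity)
        nlinarith only [hdduv, hdd2]
      have h6 : 2 * s * (dU + dV) ≤ 2 * s * ((13 / 25) * s) :=
        mul_le_mul_of_nonneg_left hduv (by linarith only [hs0])
      nlinarith only [h6, hdsq, hdd2]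
    have hLW0 : 0 ≤ LW := by rw [hLWdef]; positivity
    have hLWc : LW ≤ (63 / 50) * c2 := by
      rw [hLWdef]
      linarith only [hdd]
    have hfecL : frob E * cL ≤ (63 / 50) * (s * Dq) := by
      apply sqle _ (by positivity)
      have h1 : frob E ^ 2 * cL ^ 2 ≤ (Dq ^ 2 / 2) * ((3969 / 1250) * s ^ 2) :=
        mul_le_mul (by linarith only [hED2]) hcLb (sq_nonneg cL) (by positivity)
      nlinarith only [h1]
    -- final arithmetic
    rw [hopM, ge_iff_le, ← sub_nonneg]
    have hrw : 21 / 400 * Dq ^ 2 + 1 / (8 * σm) * zq ^ 2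
        - 16 / 1683 * (1 / σm) * frob (gradg A M U V) ^ 2
        = (21 / 400 * σm * Dq ^ 2 + 1 / 8 * zq ^ 2
            - 16 / 1683 * frob (gradg A M U V) ^ 2) / σm := by
      field_simp
    rw [hrw]
    apply div_nonneg _ hσm0.le
    rw [← sub_nonneg]
    have hgq0 : 0 ≤ frob (gradg A M U V) := frob_nonneg _
    have hT : frob (gradg A M U V) ≤ (693 / 500) * (s * Dq) + (63 / 200) * (c2 * Dq)
        + (1 / 4) * zq := by
      have h1 : g1 ≤ (693 / 500) * (s * Dq) := by
        calc g1 ≤ (11 / 10) * frob E * cL := hg1b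
          _ = (11 / 10) * (frob E * cL) := by ring
          _ ≤ (11 / 10) * ((63 / 50) * (s * Dq)) :=
              mul_le_mul_of_nonneg_left hfecL (by norm_num)
          _ = (693 / 500) * (s * Dq) := by ring
      have h2 : Dq * LW ≤ (63 / 50) * (c2 * Dq) := by
        calc Dq * LW ≤ Dq * ((63 / 50) * c2) := mul_le_mul_of_nonneg_left hLWc hDq0
          _ = (63 / 50) * (c2 * Dq) := by ring
      calc frob (gradg A M U V) ≤ g1 + (1 / 4) * (Dq * LW) + (1 / 4) * zq := hgqb
        _ ≤ (693 / 500) * (s * Dq) + (1 / 4) * ((63 / 50) * (c2 * Dq)) + (1 / 4) * zq := by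
            linarith only [h1, h2]
        _ = (693 / 500) * (s * Dq) + (63 / 200) * (c2 * Dq) + (1 / 4) * zq := by ring
    have ha0 : 0 ≤ s * Dq := mul_nonneg hs0.le hDq0
    have hb0 : 0 ≤ c2 * Dq := mul_nonneg hc20.le hDq0
    have hb2 : (c2 * Dq) ^ 2 = 2 * (s * Dq) ^ 2 := by
      rw [mul_pow, mul_pow, hc2s]; ring
    have hba : c2 * Dq ≤ (1415 / 1000) * (s * Dq) := by
      apply sqle _ (by positivity)
      nlinarith only [hb2, sq_nonneg (s * Dq)]
    have hT2 : frob (gradg A M U V) ≤ (7327 / 4000) * (s * Dq) + (1 / 4) * zq := by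
      have h3 : (63 / 200) * (c2 * Dq) ≤ (1783 / 4000) * (s * Dq) := by linarith only [hba, ha0]
      linarith only [hT, h3]
    have hgsq2 : frob (gradg A M U V) ^ 2
        ≤ ((7327 / 4000) * (s * Dq) + (1 / 4) * zq) ^ 2 := by
      nlinarith only [hT2, hgq0, ha0, hzq0]
    rw [← hs2]
    nlinarith only [hgsq2, sq_nonneg (2 * (s * Dq) - 5 * zq), mul_nonneg ha0 hzq0, ha0, hzq0]
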